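/- arXiv:2406.01130 — 2 statements merged into one kernel-verified Lean document; each statement's English description precedes it below -/
import Mathlib

section
/- For finite probability measures μ and ν on a finite metric space, if the training points are partitioned into batches and the validation points into batches, then the hierarchical optimal transport cost HOT(μ, ν) — defined as the optimal transport cost between the uniform measures over batches, with ground cost between two batches given by the optimal transport cost between the uniform measures on the points of those batches — is greater than or equal to the optimal transport cost OT(μ, ν) between the original uniform measures. -/
/-
Optimal couplings exist, since the couplings form a compact set. Take an optimal coupling `P`
of the batch measures for the cost `C̄`, and for every pair of batches `(i, j)` an optimal
coupling `π i j` of the two batches. Moving mass `P i j * π i j k l` from point `k` of batch `i`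
to point `l` of batch `j` couples the two point clouds, and its cost is
`∑ i j, P i j * C̄ i j = HOT(μ, ν)`; hence `OT(μ, ν) ≤ HOT(μ, ν)`.
-/

open Finset

/-- A coupling between finite measures `μ` and `ν` given as weight functions. -/
def IsCoupling {ι κ : Type*} [Fintype ι] [Fintype κ]
    (μ : ι → ℝ) (ν : κ → ℝ) (π : ι → κ → ℝ) : Prop :=
  (∀ i j, 0 ≤ π i j) ∧ (∀ i, ∑ j, π i j = μ i) ∧ (∀ j, ∑ i, π i j = ν j)

/-- Discrete optimal transport cost between `μ` and `ν` for ground cost `C`. -/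
noncomputable def OTcost {ι κ : Type*} [Fintype ι] [Fintype κ]
    (μ : ι → ℝ) (ν : κ → ℝ) (C : ι → κ → ℝ) : ℝ :=
  sInf {c : ℝ | ∃ π : ι → κ → ℝ, IsCoupling μ ν π ∧ c = ∑ i, ∑ j, π i j * C i j}

/-- The uniform probability vector on a finite type. -/
noncomputable def unif (ι : Type*) [Fintype ι] : ι → ℝ :=
  fun _ => 1 / (Fintype.card ι : ℝ)

section Transport

variable {ι κ ι' κ' : Type*} [Fintype ι] [Fintype κ] [Fintype ι'] [Fintype κ']

lemma unif_nonneg (i : ι) : 0 ≤ unif ι i := by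
  unfold unif; positivity

lemma sum_unif [Nonempty ι] : ∑ i, unif ι i = 1 := by
  simp [unif]

lemma unif_prod : unif (ι × ι') = fun p => unif ι p.1 * unif ι' p.2 := by
  ext p
  simp [unif, Fintype.card_prod, mul_comm]

lemma isCoupling_mul {μ : ι → ℝ} {ν : κ → ℝ} (hμ : ∀ i, 0 ≤ μ i) (hν : ∀ j, 0 ≤ ν j)
    (hμ₁ : ∑ i, μ i = 1) (hν₁ : ∑ j, ν j = 1) : IsCoupling μ ν fun i j => μ i * ν j :=
  ⟨fun i j => mul_nonneg (hμ i) (hν j), fun i => by rw [← mul_sum, hν₁, mul_one],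
    fun j => by rw [← sum_mul, hμ₁, one_mul]⟩

lemma exists_isCoupling_unif [Nonempty ι] [Nonempty κ] :
    ∃ π, IsCoupling (unif ι) (unif κ) π :=
  ⟨_, isCoupling_mul unif_nonneg unif_nonneg sum_unif sum_unif⟩

lemma isCompact_setOf_isCoupling (μ : ι → ℝ) (ν : κ → ℝ) :
    IsCompact {π | IsCoupling μ ν π} := by
  have hclosed : IsClosed {π | IsCoupling μ ν π} := by
    simp only [IsCoupling, Set.ofPred_and, Set.ofPred_forall]
    refine (isClosed_iInter fun i => isClosed_iInter fun j =>
        isClosed_le continuous_const (by fun_prop : Continuous fun π : ι → κ → ℝ => π i j)).inter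
      ((isClosed_iInter fun i => isClosed_eq ?_ continuous_const).inter
        (isClosed_iInter fun j => isClosed_eq ?_ continuous_const)) <;> fun_prop
  refine (isCompact_Icc (a := 0) (b := fun i _ => μ i)).of_isClosed_subset hclosed ?_
  rintro π ⟨hπ, hμ, -⟩
  refine ⟨hπ, fun i j => ?_⟩
  show π i j ≤ μ i
  rw [← hμ i]
  exact single_le_sum (fun j _ => hπ i j) (mem_univ j)

lemma IsCoupling.blockwise {μ : ι → ℝ} {ν : κ → ℝ} {α : ι' → ℝ} {β : κ' → ℝ}
    {P : ι → κ → ℝ} (hP : IsCoupling μ ν P) {π : ι → κ → ι' → κ' → ℝ}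
    (hπ : ∀ i j, IsCoupling α β (π i j)) :
    IsCoupling (fun p : ι × ι' => μ p.1 * α p.2) (fun q : κ × κ' => ν q.1 * β q.2)
      fun p q => P p.1 q.1 * π p.1 q.1 p.2 q.2 := by
  refine ⟨fun p q => mul_nonneg (hP.1 _ _) ((hπ _ _).1 _ _), ?_, ?_⟩
  · rintro ⟨i, k⟩
    simp only [Fintype.sum_prod_type, ← mul_sum, (hπ _ _).2.1, ← sum_mul, hP.2.1]
  · rintro ⟨j, l⟩
    simp only [Fintype.sum_prod_type, ← mul_sum, (hπ _ _).2.2, ← sum_mul, hP.2.2]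

def transportCost (C π : ι → κ → ℝ) : ℝ :=
  ∑ i, ∑ j, π i j * C i j

lemma continuous_transportCost (C : ι → κ → ℝ) : Continuous (transportCost C) := by
  unfold transportCost; fun_prop

lemma OTcost_eq_sInf_image (μ : ι → ℝ) (ν : κ → ℝ) (C : ι → κ → ℝ) :
    OTcost μ ν C = sInf (transportCost C '' {π | IsCoupling μ ν π}) := by
  unfold OTcost transportCost
  congr 1
  ext c
  simp [eq_comm]

lemma OTcost_le_transportCost {μ : ι → ℝ} {ν : κ → ℝ} (C : ι → κ → ℝ) {π : ι → κ → ℝ}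
    (hπ : IsCoupling μ ν π) : OTcost μ ν C ≤ transportCost C π := by
  rw [OTcost_eq_sInf_image]
  exact csInf_le ((isCompact_setOf_isCoupling μ ν).image (continuous_transportCost C)).bddBelow
    (Set.mem_image_of_mem _ hπ)

lemma exists_isCoupling_OTcost_eq {μ : ι → ℝ} {ν : κ → ℝ} (h : ∃ π, IsCoupling μ ν π)
    (C : ι → κ → ℝ) : ∃ π, IsCoupling μ ν π ∧ OTcost μ ν C = transportCost C π := by
  obtain ⟨π, hπ, hmin⟩ := (isCompact_setOf_isCoupling μ ν).exists_isMinOn h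
    (continuous_transportCost C).continuousOn
  refine ⟨π, hπ, le_antisymm (OTcost_le_transportCost C hπ) ?_⟩
  rw [OTcost_eq_sInf_image]
  exact le_csInf (Set.Nonempty.image _ h) (Set.forall_mem_image.2 hmin)

lemma transportCost_blockwise (C : ι × ι' → κ × κ' → ℝ) (P : ι → κ → ℝ)
    (π : ι → κ → ι' → κ' → ℝ) :
    transportCost C (fun p q => P p.1 q.1 * π p.1 q.1 p.2 q.2) =
      transportCost (fun i j => transportCost (fun k l => C (i, k) (j, l)) (π i j)) P := by
  simp only [transportCost, Fintype.sum_prod_type, mul_sum, mul_assoc]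
  exact sum_congr rfl fun i _ => sum_comm

end Transport

theorem ot_le_hot_general (Kt Kv b b' : ℕ) (hKt : 0 < Kt) (hKv : 0 < Kv)
    (hb : 0 < b) (hb' : 0 < b')
    (C : (Fin Kt × Fin b) → (Fin Kv × Fin b') → ℝ) :
    OTcost (unif (Fin Kt × Fin b)) (unif (Fin Kv × Fin b')) C ≤
      OTcost (unif (Fin Kt)) (unif (Fin Kv))
        (fun i j => OTcost (unif (Fin b)) (unif (Fin b'))
          (fun k l => C (i, k) (j, l))) := by
  have := Fin.pos_iff_nonempty.1 hKt
  have := Fin.pos_iff_nonempty.1 hKv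
  have := Fin.pos_iff_nonempty.1 hb
  have := Fin.pos_iff_nonempty.1 hb'
  choose π hπ hπ_opt using fun i j =>
    exists_isCoupling_OTcost_eq exists_isCoupling_unif fun k l => C (i, k) (j, l)
  simp only [hπ_opt]
  obtain ⟨P, hP, hP_opt⟩ := exists_isCoupling_OTcost_eq exists_isCoupling_unif
    fun i j => transportCost (fun k l => C (i, k) (j, l)) (π i j)
  rw [hP_opt, ← transportCost_blockwise, unif_prod, unif_prod]
  exact OTcost_le_transportCost C (hP.blockwise hπ)

/-- hierarchical OT (batch-level OT with within-batch OT ground cost)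
upper-bounds the ordinary OT between the uniform empirical measures. -/
theorem ot_le_hot (Kt Kv b b' : ℕ) (hKt : 0 < Kt) (hKv : 0 < Kv)
    (hb : 0 < b) (hb' : 0 < b')
    (C : (Fin Kt × Fin b) → (Fin Kv × Fin b') → ℝ) (hC : ∀ p q, 0 ≤ C p q) :
    OTcost (unif (Fin Kt × Fin b)) (unif (Fin Kv × Fin b')) C ≤
      OTcost (unif (Fin Kt)) (unif (Fin Kv))
        (fun i j => OTcost (unif (Fin b)) (unif (Fin b'))
          (fun k l => C (i, k) (j, l))) :=
  ot_le_hot_general Kt Kv b b' hKt hKv hb hb' C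
end

section
/- The glued-plan construction establishes HOT as an upper bound constructively: the cost of the glued plan under the ground cost C equals ∑_{ij} π̄*_{ij} · ⟨π^{(i,j)}, C restricted to B_i × B'_j⟩, which equals ∑_{ij} π̄*_{ij} C̄_{ij} = HOT(μ, ν) when each π^{(i,j)} is optimal within its batch pair; hence OT(μ, ν) ≤ HOT(μ, ν). -/
open Finset

/-- if the within-batch couplings achieve the batch-to-batch OT
costs and the batch-level coupling achieves HOT, then the glued plan has cost
exactly HOT, and hence OT(μ, ν) ≤ HOT(μ, ν). -/
theorem glued_plan_cost_eq_hot_and_ot_le_hot (Kt Kv b b' : ℕ)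
    (hKt : 0 < Kt) (hKv : 0 < Kv) (hb : 0 < b) (hb' : 0 < b')
    (C : (Fin Kt × Fin b) → (Fin Kv × Fin b') → ℝ) (hC : ∀ p q, 0 ≤ C p q)
    (Cbar : Fin Kt → Fin Kv → ℝ)
    (hCbar : ∀ i j, Cbar i j =
      OTcost (unif (Fin b)) (unif (Fin b')) (fun k l => C (i, k) (j, l)))
    (πin : Fin Kt → Fin Kv → Fin b → Fin b' → ℝ)
    (hπin : ∀ i j, IsCoupling (unif (Fin b)) (unif (Fin b')) (πin i j))
    (hπin_opt : ∀ i j, ∑ k, ∑ l, πin i j k l * C (i, k) (j, l) = Cbar i j)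
    (πbar : Fin Kt → Fin Kv → ℝ)
    (hπbar : IsCoupling (unif (Fin Kt)) (unif (Fin Kv)) πbar)
    (hπbar_opt : ∑ i, ∑ j, πbar i j * Cbar i j =
      OTcost (unif (Fin Kt)) (unif (Fin Kv)) Cbar) :
    (∑ p : Fin Kt × Fin b, ∑ q : Fin Kv × Fin b',
        (πbar p.1 q.1 * πin p.1 q.1 p.2 q.2) * C p q =
        OTcost (unif (Fin Kt)) (unif (Fin Kv)) Cbar) ∧
      OTcost (unif (Fin Kt × Fin b)) (unif (Fin Kv × Fin b')) C ≤
        OTcost (unif (Fin Kt)) (unif (Fin Kv)) Cbar := by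
  obtain ⟨hb_nn, hb_row, hb_col⟩ := hπbar
  set π : (Fin Kt × Fin b) → (Fin Kv × Fin b') → ℝ :=
    fun p q => πbar p.1 q.1 * πin p.1 q.1 p.2 q.2 with hπdef
  have hcost : ∑ p : Fin Kt × Fin b, ∑ q : Fin Kv × Fin b', π p q * C p q =
      OTcost (unif (Fin Kt)) (unif (Fin Kv)) Cbar := by
    rw [← hπbar_opt]
    rw [Fintype.sum_prod_type]
    refine Finset.sum_congr rfl fun i _ => ?_
    have h1 : ∀ k : Fin b, ∑ q : Fin Kv × Fin b', π (i, k) q * C (i, k) q =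
        ∑ j, ∑ l, πbar i j * (πin i j k l * C (i, k) (j, l)) := by
      intro k
      rw [Fintype.sum_prod_type]
      exact Finset.sum_congr rfl fun j _ => Finset.sum_congr rfl fun l _ => by
        simp [π, mul_assoc]
    simp only [h1]
    rw [Finset.sum_comm]
    refine Finset.sum_congr rfl fun j _ => ?_
    rw [← hπin_opt i j, Finset.mul_sum]
    exact Finset.sum_congr rfl fun k _ => by rw [Finset.mul_sum]
  refine ⟨hcost, ?_⟩
  have hcoupling : IsCoupling (unif (Fin Kt × Fin b)) (unif (Fin Kv × Fin b')) π := by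
    refine ⟨fun p q => mul_nonneg (hb_nn _ _) ((hπin p.1 q.1).1 _ _), ?_, ?_⟩
    · rintro ⟨i, k⟩
      rw [Fintype.sum_prod_type]
      have h2 : ∀ j : Fin Kv, ∑ l, π (i, k) (j, l) = πbar i j * unif (Fin b) ⟨0, hb⟩ := by
        intro j
        simp only [hπdef]
        rw [← Finset.mul_sum]
        congr 1
        rw [(hπin i j).2.1 k]
        rfl
      simp only [h2]
      rw [← Finset.sum_mul, hb_row i]
      simp only [unif, Fintype.card_prod, Fintype.card_fin]
      rw [Nat.cast_mul]
      field_simp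
    · rintro ⟨j, l⟩
      rw [Fintype.sum_prod_type]
      have h3 : ∀ i : Fin Kt, ∑ k, π (i, k) (j, l) = πbar i j * unif (Fin b') ⟨0, hb'⟩ := by
        intro i
        simp only [hπdef]
        rw [← Finset.mul_sum]
        congr 1
        rw [(hπin i j).2.2 l]
        rfl
      simp only [h3]
      rw [← Finset.sum_mul, hb_col j]
      simp only [unif, Fintype.card_prod, Fintype.card_fin]
      rw [Nat.cast_mul]
      field_simp
  rw [← hcost]
  apply csInf_le
  · refine ⟨0, fun c hc => ?_⟩
    obtain ⟨ρ, hρ, rfl⟩ := hc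
    exact Finset.sum_nonneg fun p _ => Finset.sum_nonneg fun q _ =>
      mul_nonneg (hρ.1 _ _) (hC _ _)
  · exact ⟨π, hcoupling, rfl⟩
end
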